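/- arXiv:1911.03508 — 2 statements merged into one kernel-verified Lean document; each statement's English description precedes it below -/
import Mathlib

section
/- Let v₁, …, v_N (N ≥ 2) be i.i.d. nonnegative random variables with common continuous CDF Q, and let v⁺ and v⁻ denote the highest and second-highest values. Then for any reserve price r ≥ 0, the expected second-price-auction revenue satisfies E[max{r, v⁻}·1{v⁺ ≥ r}] = E[v⁻] + ∫₀^r Q⁻(z) dz − r·Q(r)^N, where Q⁻(z) = N·Q(z)^(N-1) − (N−1)·Q(z)^N is the CDF of v⁻. -/
open MeasureTheory ProbabilityTheory in
/-- Expected revenue of a second-price auction with reserve `r ≥ 0` over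
`N = n + 2` i.i.d. nonnegative valuations with continuous CDF `Q`:
`E[max{r, v⁻}·1{v⁺ ≥ r}] = E[v⁻] + ∫₀^r Q⁻(z) dz − r·Q(r)^N`, where
`Q⁻(z) = N·Q(z)^(N−1) − (N−1)·Q(z)^N` is the CDF of the second-highest value. -/
theorem second_price_auction_expected_revenue
    {Ω : Type*} [MeasurableSpace Ω] (μ : Measure Ω) [IsProbabilityMeasure μ]
    (n : ℕ) (v : Fin (n + 2) → Ω → ℝ)
    (hmeas : ∀ i, Measurable (v i))
    (hindep : iIndepFun v μ)
    (hnonneg : ∀ i ω, 0 ≤ v i ω)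
    (hint : ∀ i, Integrable (v i) μ)
    (Q : ℝ → ℝ) (hQcont : Continuous Q)
    (hcdf : ∀ (i : Fin (n + 2)) (z : ℝ), (μ {ω | v i ω ≤ z}).toReal = Q z)
    (vplus vminus : Ω → ℝ)
    (hvminusMeas : Measurable vminus) (hvminusInt : Integrable vminus μ)
    -- `v⁺` is the highest of the valuations
    (hplus : ∀ ω, (∃ i, vplus ω = v i ω) ∧ ∀ i, v i ω ≤ vplus ω)
    -- `v⁻` is the second highest valuation: the max over pairs of pairwise minima
    (hminus : ∀ ω, (∃ i j, i ≠ j ∧ vminus ω = min (v i ω) (v j ω)) ∧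
        ∀ i j, i ≠ j → min (v i ω) (v j ω) ≤ vminus ω)
    (r : ℝ) (hr : 0 ≤ r) :
    ∫ ω, (if r ≤ vplus ω then max r (vminus ω) else 0) ∂μ =
      (∫ ω, vminus ω ∂μ) +
        (∫ z in (0 : ℝ)..r,
          (((n : ℝ) + 2) * Q z ^ (n + 1) - ((n : ℝ) + 1) * Q z ^ (n + 2))) -
        r * Q r ^ (n + 2) := by
  classical
  have hfin : ∀ s : Set Ω, μ s ≠ ⊤ := fun s => (measure_lt_top μ s).ne
  have hμeq : ∀ (i : Fin (n + 2)) (z : ℝ),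
      μ {ω | v i ω ≤ z} = ENNReal.ofReal (Q z) := fun i z => by
    rw [← hcdf i z, ENNReal.ofReal_toReal (hfin _)]
  have hQ0 : ∀ z, 0 ≤ Q z := fun z => (hcdf 0 z) ▸ ENNReal.toReal_nonneg
  have hQ1 : ∀ z, Q z ≤ 1 := fun z => by
    rw [← hcdf 0 z]
    exact (ENNReal.toReal_mono ENNReal.one_ne_top prob_le_one).trans_eq ENNReal.toReal_one
  set Qm : ℝ → ℝ := fun z =>
    ((n : ℝ) + 2) * Q z ^ (n + 1) - ((n : ℝ) + 1) * Q z ^ (n + 2) with hQm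
  have hvmnn : ∀ ω, 0 ≤ vminus ω := fun ω => by
    obtain ⟨i, j, hij, hv⟩ := (hminus ω).1
    rw [hv]; exact le_min (hnonneg i ω) (hnonneg j ω)
  -- Step A: CDF of the maximum
  have hA : ∀ z : ℝ, μ (⋂ i, {ω | v i ω ≤ z}) = ENNReal.ofReal (Q z ^ (n + 2)) := by
    intro z
    show μ (⋂ i, v i ⁻¹' Set.Iic z) = _
    rw [hindep.meas_iInter (fun i => ⟨Set.Iic z, measurableSet_Iic, rfl⟩)]
    have he : ∀ i : Fin (n+2), μ (v i ⁻¹' Set.Iic z) = ENNReal.ofReal (Q z) :=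
      fun i => hμeq i z
    simp only [he, Finset.prod_const, Finset.card_univ, Fintype.card_fin]
    rw [← ENNReal.ofReal_pow (hQ0 z)]
  -- Step B: CDF of the second-highest
  have hB : ∀ z : ℝ, (μ {ω | vminus ω ≤ z}).toReal = Qm z := by
    intro z
    set B : Fin (n + 2) → Set Ω := fun i =>
      ⋂ j, v j ⁻¹' (if j = i then Set.Ioi z else Set.Iic z) with hBdef
    have hBsub1 : ∀ i ω, ω ∈ B i → z < v i ω := by
      intro i ω hω
      have := Set.mem_iInter.1 hω i
      simpa using this
    have hBsub2 : ∀ i j ω, j ≠ i → ω ∈ B i → v j ω ≤ z := by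
      intro i j ω hji hω
      have := Set.mem_iInter.1 hω j
      simpa [hji] using this
    have hset : {ω | vminus ω ≤ z} = (⋂ i, {ω | v i ω ≤ z}) ∪ ⋃ i, B i := by
      ext ω
      simp only [Set.mem_setOf_eq, Set.mem_union, Set.mem_iInter, Set.mem_iUnion]
      constructor
      · intro h
        by_cases hall : ∀ i, v i ω ≤ z
        · exact Or.inl hall
        · push_neg at hall
          obtain ⟨i, hi⟩ := hall
          refine Or.inr ⟨i, Set.mem_iInter.2 fun j => ?_⟩
          by_cases hji : j = i
          · subst hji; simpa using hi
          · simp only [Set.mem_preimage, if_neg hji]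
            by_contra hj
            have hmin := (hminus ω).2 i j (fun hc => hji hc.symm)
            exact absurd (lt_of_lt_of_le (lt_min hi (lt_of_not_ge hj)) hmin) (not_lt.2 h)
      · rintro (hall | ⟨i, hBi⟩)
        · obtain ⟨k, l, hkl, hv⟩ := (hminus ω).1
          rw [hv]; exact (min_le_left _ _).trans (hall k)
        · obtain ⟨k, l, hkl, hv⟩ := (hminus ω).1
          rw [hv]
          by_cases hki : k = i
          · have hli : l ≠ i := fun hc => hkl (hki.trans hc.symm)
            exact (min_le_right _ _).trans (hBsub2 i l ω hli hBi)
          · exact (min_le_left _ _).trans (hBsub2 i k ω hki hBi)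
    have hBmeasure : ∀ i, μ (B i) = ENNReal.ofReal ((1 - Q z) * Q z ^ (n + 1)) := by
      intro i
      rw [hBdef, hindep.meas_iInter (fun j => ⟨if j = i then Set.Ioi z else Set.Iic z,
        by split <;> [exact measurableSet_Ioi; exact measurableSet_Iic], rfl⟩)]
      have hioi : μ (v i ⁻¹' Set.Ioi z) = ENNReal.ofReal (1 - Q z) := by
        have hc : v i ⁻¹' Set.Ioi z = (v i ⁻¹' Set.Iic z)ᶜ := by
          ext ω; simp [not_le]
        have he : μ (v i ⁻¹' Set.Iic z) = ENNReal.ofReal (Q z) := hμeq i z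
        rw [hc, prob_compl_eq_one_sub ((hmeas i) measurableSet_Iic), he,
          ENNReal.ofReal_sub _ (hQ0 z), ENNReal.ofReal_one]
      rw [← Finset.mul_prod_erase Finset.univ _ (Finset.mem_univ i)]
      have h1 : v i ⁻¹' (if i = i then Set.Ioi z else Set.Iic z) = v i ⁻¹' Set.Ioi z := by
        simp
      rw [h1, hioi]
      have h2 : ∀ j ∈ Finset.univ.erase i,
          μ (v j ⁻¹' (if j = i then Set.Ioi z else Set.Iic z)) = ENNReal.ofReal (Q z) := by
        intro j hj
        rw [if_neg (Finset.mem_erase.1 hj).1]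
        exact hμeq j z
      rw [Finset.prod_congr rfl h2, Finset.prod_const, Finset.card_erase_of_mem
        (Finset.mem_univ i), Finset.card_univ, Fintype.card_fin]
      rw [← ENNReal.ofReal_pow (hQ0 z), ← ENNReal.ofReal_mul (by linarith [hQ1 z])]
      norm_num
    have hBmeas : ∀ i, MeasurableSet (B i) :=
      fun i => MeasurableSet.iInter fun j => (hmeas j)
        (by split <;> [exact measurableSet_Ioi; exact measurableSet_Iic])
    have hdisjBB : Pairwise (Function.onFun Disjoint B) := by
      intro i j hij
      refine Set.disjoint_left.2 fun ω hωi hωj => ?_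
      exact absurd (hBsub2 j i ω hij hωj) (not_le.2 (hBsub1 i ω hωi))
    have hdisjAB : Disjoint (⋂ i, {ω | v i ω ≤ z}) (⋃ i, B i) := by
      refine Set.disjoint_left.2 fun ω hωA hωB => ?_
      obtain ⟨i, hωi⟩ := Set.mem_iUnion.1 hωB
      exact absurd (Set.mem_iInter.1 hωA i) (not_le.2 (hBsub1 i ω hωi))
    have hnn2 : (0:ℝ) ≤ (1 - Q z) * Q z ^ (n + 1) :=
      mul_nonneg (by linarith [hQ1 z]) (pow_nonneg (hQ0 z) _)
    rw [hset, measure_union hdisjAB (MeasurableSet.iUnion hBmeas),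
      measure_iUnion hdisjBB hBmeas, hA]
    simp only [hBmeasure]
    rw [tsum_fintype]
    simp only [Finset.sum_const, Finset.card_univ, Fintype.card_fin, nsmul_eq_mul]
    rw [← ENNReal.ofReal_natCast (n + 2),
      ← ENNReal.ofReal_mul (by positivity),
      ← ENNReal.ofReal_add (pow_nonneg (hQ0 z) _) (mul_nonneg (by positivity) hnn2),
      ENNReal.toReal_ofReal (add_nonneg (pow_nonneg (hQ0 z) _)
        (mul_nonneg (by positivity) hnn2))]
    push_cast
    simp only [hQm]
    ring
  -- Step C: the event that all valuations are below the reserve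
  have hkey : ∀ i : Fin (n + 2), μ {ω | v i ω < r} = ENNReal.ofReal (Q r) := by
    intro i
    have hmono : Monotone (fun k : ℕ => {ω | v i ω ≤ r - 1 / (k + 1)}) := by
      intro a b hab ω hω
      simp only [Set.mem_setOf_eq] at hω ⊢
      have hcast : (a : ℝ) ≤ b := Nat.cast_le.2 hab
      have h1 : (1 : ℝ) / (b + 1) ≤ 1 / (a + 1) := by
        apply one_div_le_one_div_of_le (by positivity)
        linarith
      linarith
    have hun : (⋃ k : ℕ, {ω | v i ω ≤ r - 1 / (k + 1)}) = {ω | v i ω < r} := by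
      ext ω
      simp only [Set.mem_iUnion, Set.mem_setOf_eq]
      constructor
      · rintro ⟨k, hk⟩
        have : (0:ℝ) < 1 / (k + 1) := by positivity
        linarith
      · intro h
        obtain ⟨k, hk⟩ := exists_nat_one_div_lt (sub_pos.2 h)
        exact ⟨k, by push_cast at hk ⊢; linarith⟩
    have h1 : Filter.Tendsto (fun k : ℕ => μ {ω | v i ω ≤ r - 1 / (k + 1)})
        Filter.atTop (nhds (μ {ω | v i ω < r})) := by
      rw [← hun]
      exact tendsto_measure_iUnion_atTop hmono
    have h2 : Filter.Tendsto (fun k : ℕ => μ {ω | v i ω ≤ r - 1 / (k + 1)})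
        Filter.atTop (nhds (ENNReal.ofReal (Q r))) := by
      simp only [hμeq]
      apply ENNReal.tendsto_ofReal
      have hb : Filter.Tendsto (fun k : ℕ => r - 1 / ((k : ℝ) + 1))
          Filter.atTop (nhds r) := by
        have := tendsto_one_div_add_atTop_nhds_zero_nat (𝕜 := ℝ)
        have := Filter.Tendsto.const_sub r this
        simpa using this
      exact (hQcont.tendsto r).comp hb
    exact tendsto_nhds_unique h1 h2
  have hSset : {ω | ¬ r ≤ vplus ω} = ⋂ i, v i ⁻¹' Set.Iio r := by
    ext ω
    simp only [Set.mem_setOf_eq, not_le, Set.mem_iInter, Set.mem_preimage, Set.mem_Iio]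
    constructor
    · intro h i; exact lt_of_le_of_lt ((hplus ω).2 i) h
    · intro h
      obtain ⟨i, hi⟩ := (hplus ω).1
      rw [hi]; exact h i
  have hSmeas : MeasurableSet {ω | ¬ r ≤ vplus ω} := by
    rw [hSset]; exact MeasurableSet.iInter fun i => (hmeas i) measurableSet_Iio
  have hC : (μ {ω | ¬ r ≤ vplus ω}).toReal = Q r ^ (n + 2) := by
    rw [hSset, hindep.meas_iInter (fun i => ⟨Set.Iio r, measurableSet_Iio, rfl⟩)]
    have : ∀ i : Fin (n+2), μ (v i ⁻¹' Set.Iio r) = ENNReal.ofReal (Q r) := fun i => hkey i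
    simp only [this, Finset.prod_const, Finset.card_univ, Fintype.card_fin]
    rw [← ENNReal.ofReal_pow (hQ0 r), ENNReal.toReal_ofReal (pow_nonneg (hQ0 r) _)]
  -- Step D: layer-cake for min(v⁻, r)
  set g : Ω → ℝ := fun ω => min (vminus ω) r with hg
  have hgmeas : Measurable g := hvminusMeas.min measurable_const
  have hgnn : ∀ ω, 0 ≤ g ω := fun ω => le_min (hvmnn ω) hr
  have hgint : Integrable g μ := by
    refine Integrable.mono' (integrable_const r) hgmeas.aestronglyMeasurable
      (Filter.Eventually.of_forall fun ω => ?_)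
    rw [Real.norm_eq_abs, abs_of_nonneg (hgnn ω)]
    exact min_le_right _ _
  have hQmcont : Continuous Qm := by
    simp only [hQm]; fun_prop
  have hlayer : ∫ ω, g ω ∂μ = ∫ t in (0:ℝ)..r, (1 - Qm t) := by
    rw [hgint.integral_eq_integral_meas_lt (Filter.Eventually.of_forall hgnn)]
    have hmeaseq : Set.EqOn (fun t => (μ {a | t < g a}).toReal)
        (Set.indicator (Set.Ioo 0 r) (fun t => 1 - Qm t)) (Set.Ioi (0:ℝ)) := by
      intro t ht
      dsimp only
      by_cases htr : t < r
      · have hs : {a | t < g a} = (vminus ⁻¹' Set.Iic t)ᶜ := by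
          ext a
          simp only [Set.mem_setOf_eq, Set.mem_compl_iff, Set.mem_preimage,
            Set.mem_Iic, not_le, hg, lt_min_iff]
          exact ⟨fun h => h.1, fun h => ⟨h, htr⟩⟩
        have hBt : (μ (vminus ⁻¹' Set.Iic t)).toReal = Qm t := hB t
        rw [hs, prob_compl_eq_one_sub (hvminusMeas measurableSet_Iic),
          ENNReal.toReal_sub_of_le prob_le_one ENNReal.one_ne_top, ENNReal.toReal_one, hBt,
          Set.indicator_of_mem (Set.mem_Ioo.2 ⟨ht, htr⟩)]
      · have hs : {a | t < g a} = ∅ := by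
          ext a
          simp only [Set.mem_setOf_eq, Set.mem_empty_iff_false, iff_false, not_lt, hg]
          exact le_trans (min_le_right _ _) (le_of_not_gt htr)
        rw [hs, Set.indicator_of_notMem (fun hc => htr hc.2)]
        simp
    change ∫ t in Set.Ioi (0:ℝ), (μ {a | t < g a}).toReal = _
    rw [setIntegral_congr_fun measurableSet_Ioi hmeaseq,
      setIntegral_indicator measurableSet_Ioo,
      Set.inter_eq_right.mpr Set.Ioo_subset_Ioi_self,
      ← MeasureTheory.integral_Ioc_eq_integral_Ioo,
      ← intervalIntegral.integral_of_le hr]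
  -- Step E: pointwise decomposition
  set S : Set Ω := {ω | ¬ r ≤ vplus ω} with hS
  have hpt : ∀ ω, (if r ≤ vplus ω then max r (vminus ω) else 0)
      = vminus ω + (r - g ω) - Set.indicator S (fun _ => r) ω := by
    intro ω
    by_cases h : r ≤ vplus ω
    · rw [if_pos h, Set.indicator_of_notMem
        (by simp only [hS, Set.mem_setOf_eq, not_not]; exact h)]
      have h1 := max_add_min r (vminus ω)
      have h2 : min r (vminus ω) = g ω := min_comm _ _
      simp only [hg] at h2 ⊢
      linarith
    · rw [if_neg h, Set.indicator_of_mem (by simp only [hS, Set.mem_setOf_eq]; exact h)]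
      have hvm : vminus ω ≤ r := by
        obtain ⟨i, j, hij, hv⟩ := (hminus ω).1
        rw [hv]
        exact le_of_lt (lt_of_le_of_lt ((min_le_left _ _).trans ((hplus ω).2 i))
          (lt_of_not_ge h))
      have : g ω = vminus ω := min_eq_left hvm
      rw [this]; ring
  -- Step F: assemble
  have hind_int : Integrable (Set.indicator S fun _ => r) μ :=
    (integrable_const r).indicator hSmeas
  have hrg_int : Integrable (fun ω => r - g ω) μ := (integrable_const r).sub hgint
  calc ∫ ω, (if r ≤ vplus ω then max r (vminus ω) else 0) ∂μ
      = ∫ ω, (vminus ω + (r - g ω) - Set.indicator S (fun _ => r) ω) ∂μ := by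
        exact integral_congr_ae (Filter.Eventually.of_forall hpt)
    _ = (∫ ω, vminus ω ∂μ) + (∫ ω, (r - g ω) ∂μ) - ∫ ω, Set.indicator S (fun _ => r) ω ∂μ := by
        have h12 : Integrable (fun ω => vminus ω + (r - g ω)) μ := hvminusInt.add hrg_int
        rw [integral_sub h12 hind_int, integral_add hvminusInt hrg_int]
    _ = (∫ ω, vminus ω ∂μ) + (r - ∫ ω, g ω ∂μ) - r * Q r ^ (n + 2) := by
        rw [integral_sub (integrable_const r) hgint, integral_const,
          integral_indicator_const _ hSmeas]
        simp only [measure_univ, ENNReal.toReal_one, one_smul, smul_eq_mul]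
        rw [show μ.real S = (μ S).toReal from rfl, hC, show μ.real Set.univ = 1 by simp]
        ring_nf
    _ = (∫ ω, vminus ω ∂μ) +
        (∫ z in (0 : ℝ)..r,
          (((n : ℝ) + 2) * Q z ^ (n + 1) - ((n : ℝ) + 1) * Q z ^ (n + 2))) -
        r * Q r ^ (n + 2) := by
        rw [hlayer, intervalIntegral.integral_sub intervalIntegrable_const
          (hQmcont.intervalIntegrable 0 r)]
        simp only [intervalIntegral.integral_const, smul_eq_mul, mul_one, hQm]
        ring_nf
end

section
/- Let Z₁ = Σ_{τ=1}^{T} z_{1,τ} and Z₂ = Σ_{τ=1}^{T} z_{2,τ} be sums of random variables with |z_{1,τ} − z_{2,τ}| ≤ 1 for all τ and E[z_{1,τ} − z_{2,τ} | ℱ_{τ−1}] ≤ 0, where ℱ_{τ−1} is the σ-algebra generated by (z_{1,s}, z_{2,s})_{s < τ}. Then for any γ̃ ∈ [0,1] and A ∈ ℝ, P( (1 − γ̃)·Z₁ ≥ Z₂ + A ) ≤ exp(−γ̃·A). -/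
lemma exp_cubic_ub {x : ℝ} (hx : |x| ≤ 1) :
    Real.exp x ≤ 1 + x + x ^ 2 / 2 + (2 / 9) * |x| ^ 3 := by
  have h := Real.exp_bound hx (n := 3) (by norm_num)
  have hs : ∑ m ∈ Finset.range 3, x ^ m / m.factorial = 1 + x + x ^ 2 / 2 := by
    norm_num [Finset.sum_range_succ, Nat.factorial]
  rw [hs] at h
  have h2 := (abs_sub_le_iff.1 h).1
  have h3 : (((3:ℕ).succ : ℝ) / (((3:ℕ).factorial : ℝ) * ((3:ℕ):ℝ))) = 2 / 9 := by
    norm_num [Nat.factorial]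
  rw [h3] at h2
  linarith

lemma key_scalar {γ : ℝ} (h0 : 0 ≤ γ) (h1 : γ ≤ 1) :
    Real.exp (γ * (1 - γ)) + Real.exp (-γ) ≤ 2 := by
  have hu0 : 0 ≤ γ * (1 - γ) := mul_nonneg h0 (by linarith)
  have hu1 : γ * (1 - γ) ≤ 1 := by nlinarith
  have ha := exp_cubic_ub (x := γ * (1 - γ)) (by rw [abs_of_nonneg hu0]; exact hu1)
  have hb := exp_cubic_ub (x := -γ) (by rw [abs_neg, abs_of_nonneg h0]; exact h1)
  rw [abs_of_nonneg hu0] at ha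
  rw [abs_neg, abs_of_nonneg h0] at hb
  nlinarith [pow_nonneg h0 3, pow_nonneg h0 4, pow_nonneg h0 5, sq_nonneg (1 - γ),
    mul_nonneg (pow_nonneg h0 3) (sub_nonneg.2 h1),
    mul_nonneg (mul_nonneg (pow_nonneg h0 3) (sub_nonneg.2 h1)) (sub_nonneg.2 h1)]



lemma pointwise_bound {γ a b : ℝ} (h0 : 0 ≤ γ) (h1 : γ ≤ 1)
    (ha : 0 ≤ a) (hb : 0 ≤ b) (hd : |a - b| ≤ 1) :
    Real.exp (γ * ((1 - γ) * a - b)) ≤ 1 + (1 - Real.exp (-γ)) * (a - b) := by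
  obtain ⟨hd1, hd2⟩ := abs_le.mp hd
  rcases le_total (a - b) 0 with hneg | hpos
  · have h2 : γ * ((1 - γ) * a - b) ≤ γ * (a - b) := by
      nlinarith [mul_nonneg (mul_nonneg h0 h0) ha]
    have h3 : Real.exp (γ * ((1 - γ) * a - b)) ≤ Real.exp (γ * (a - b)) :=
      Real.exp_le_exp.mpr h2
    have hcvx := convexOn_exp.2 (Set.mem_univ (-γ)) (Set.mem_univ (0 : ℝ))
      (neg_nonneg.2 hneg) (by linarith : (0:ℝ) ≤ 1 + (a - b)) (by ring)
    simp only [smul_eq_mul, mul_zero, add_zero, Real.exp_zero] at hcvx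
    have harg : -(a - b) * -γ = γ * (a - b) := by ring
    rw [harg] at hcvx
    calc Real.exp (γ * ((1 - γ) * a - b)) ≤ Real.exp (γ * (a - b)) := h3
      _ ≤ -(a - b) * Real.exp (-γ) + (1 + (a - b)) * 1 := hcvx
      _ = 1 + (1 - Real.exp (-γ)) * (a - b) := by ring
  · have h2 : γ * ((1 - γ) * a - b) ≤ γ * (1 - γ) * (a - b) := by
      nlinarith [mul_nonneg (mul_nonneg h0 h0) hb]
    have h3 : Real.exp (γ * ((1 - γ) * a - b)) ≤ Real.exp (γ * (1 - γ) * (a - b)) :=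
      Real.exp_le_exp.mpr h2
    have hcvx := convexOn_exp.2 (Set.mem_univ (0 : ℝ)) (Set.mem_univ (γ * (1 - γ)))
      (by linarith : (0:ℝ) ≤ 1 - (a - b)) hpos (by ring)
    simp only [smul_eq_mul, mul_zero, zero_add, Real.exp_zero] at hcvx
    have harg : (a - b) * (γ * (1 - γ)) = γ * (1 - γ) * (a - b) := by ring
    rw [harg] at hcvx
    have hkey := key_scalar h0 h1
    calc Real.exp (γ * ((1 - γ) * a - b)) ≤ Real.exp (γ * (1 - γ) * (a - b)) := h3
      _ ≤ (1 - (a - b)) * 1 + (a - b) * Real.exp (γ * (1 - γ)) := hcvx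
      _ ≤ (1 - (a - b)) * 1 + (a - b) * (2 - Real.exp (-γ)) := by
          nlinarith
      _ = 1 + (1 - Real.exp (-γ)) * (a - b) := by ring



open MeasureTheory in
/-- Multiplicative Azuma inequality (Koufogiannakis–Young): if
`Z₁ = Σ_{τ<T} z_{1,τ}` and `Z₂ = Σ_{τ<T} z_{2,τ}` are sums of nonnegative
random variables with `|z_{1,τ} − z_{2,τ}| ≤ 1` and
`E[z_{1,τ} − z_{2,τ} | ℱ_{τ−1}] ≤ 0` where `ℱ_{τ−1}` is generated by
`(z_{1,s}, z_{2,s})_{s<τ}`, then for `γ̃ ∈ [0,1]` and `A ∈ ℝ`,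
`P((1 − γ̃)·Z₁ ≥ Z₂ + A) ≤ exp(−γ̃·A)`. -/
theorem multiplicative_azuma
    {Ω : Type*} [mΩ : MeasurableSpace Ω] (μ : Measure Ω) [IsProbabilityMeasure μ]
    (T : ℕ) (z1 z2 : ℕ → Ω → ℝ)
    (hmeas1 : ∀ τ, Measurable (z1 τ)) (hmeas2 : ∀ τ, Measurable (z2 τ))
    (hint1 : ∀ τ, Integrable (z1 τ) μ) (hint2 : ∀ τ, Integrable (z2 τ) μ)
    (hnonneg1 : ∀ τ ω, 0 ≤ z1 τ ω) (hnonneg2 : ∀ τ ω, 0 ≤ z2 τ ω)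
    (hdiff : ∀ τ ω, |z1 τ ω - z2 τ ω| ≤ 1)
    (F : ℕ → MeasurableSpace Ω)
    (hF : ∀ τ : ℕ, F τ =
        ⨆ s ∈ Finset.range τ,
          MeasurableSpace.comap (fun ω => (z1 s ω, z2 s ω)) inferInstance)
    (hcond : ∀ τ < T,
        (μ[fun ω => z1 τ ω - z2 τ ω | F τ]) ≤ᵐ[μ] fun _ => (0 : ℝ))
    (γ A : ℝ) (hγ : 0 ≤ γ ∧ γ ≤ 1) :
    μ {ω | (1 - γ) * ∑ τ ∈ Finset.range T, z1 τ ω ≥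
        (∑ τ ∈ Finset.range T, z2 τ ω) + A} ≤
      ENNReal.ofReal (Real.exp (-γ * A)) := by
  obtain ⟨hγ0, hγ1⟩ := hγ
  set c : ℝ := 1 - Real.exp (-γ) with hc
  have hc0 : 0 ≤ c := by
    have : Real.exp (-γ) ≤ 1 := Real.exp_le_one_iff.mpr (by linarith)
    simp only [hc]; linarith
  -- the filtration is below mΩ
  have hle : ∀ n, F n ≤ mΩ := by
    intro n; rw [hF n]
    exact iSup₂_le fun s _ => ((hmeas1 s).prodMk (hmeas2 s)).comap_le
  -- z1 s, z2 s measurable w.r.t. F n for s < n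
  have hzF : ∀ n s, s < n → Measurable[F n] (z1 s) ∧ Measurable[F n] (z2 s) := by
    intro n s hs
    have hp : Measurable[MeasurableSpace.comap
        (fun ω => (z1 s ω, z2 s ω)) inferInstance] (fun ω => (z1 s ω, z2 s ω)) :=
      measurable_iff_comap_le.mpr le_rfl
    have hsle : MeasurableSpace.comap (fun ω => (z1 s ω, z2 s ω)) inferInstance ≤ F n := by
      rw [hF n]
      exact le_iSup₂ (f := fun s (_ : s ∈ Finset.range n) =>
        MeasurableSpace.comap (fun ω => (z1 s ω, z2 s ω)) inferInstance) s
        (Finset.mem_range.mpr hs)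
    exact ⟨(measurable_fst.comp hp).mono hsle le_rfl,
      (measurable_snd.comp hp).mono hsle le_rfl⟩
  -- the exponential supermartingale
  set W : ℕ → Ω → ℝ := fun n ω =>
    Real.exp (γ * ∑ τ ∈ Finset.range n, ((1 - γ) * z1 τ ω - z2 τ ω)) with hW
  have hWpos : ∀ n ω, 0 < W n ω := fun n ω => Real.exp_pos _
  have hWle : ∀ n ω, W n ω ≤ Real.exp (γ * n) := by
    intro n ω
    apply Real.exp_le_exp.mpr
    apply mul_le_mul_of_nonneg_left _ hγ0
    calc ∑ τ ∈ Finset.range n, ((1 - γ) * z1 τ ω - z2 τ ω)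
        ≤ ∑ τ ∈ Finset.range n, (1 : ℝ) := by
          apply Finset.sum_le_sum
          intro τ _
          have h := (abs_le.mp (hdiff τ ω)).2
          nlinarith [mul_nonneg hγ0 (hnonneg1 τ ω)]
      _ = n := by simp
  have hWmeasF : ∀ n, Measurable[F n] (W n) := by
    intro n
    have hsum : Measurable[F n] (fun ω => ∑ τ ∈ Finset.range n,
        ((1 - γ) * z1 τ ω - z2 τ ω)) := by
      apply Finset.measurable_sum
      intro s hs
      have h := hzF n s (Finset.mem_range.mp hs)
      exact (measurable_const.mul h.1).sub h.2
    exact (measurable_const.mul hsum).exp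
  have hWmeas : ∀ n, Measurable (W n) := fun n => (hWmeasF n).mono (hle n) le_rfl
  have hWint : ∀ n, Integrable (W n) μ := by
    intro n
    refine Integrable.mono' (integrable_const (Real.exp (γ * n)))
      (hWmeas n).aestronglyMeasurable (ae_of_all _ fun ω => ?_)
    rw [Real.norm_eq_abs, abs_of_pos (hWpos n ω)]
    exact hWle n ω
  have hWXint : ∀ n, Integrable (fun ω => W n ω * (z1 n ω - z2 n ω)) μ := by
    intro n
    refine Integrable.bdd_mul ((hint1 n).sub (hint2 n))
      (hWmeas n).aestronglyMeasurable (c := Real.exp (γ * n)) (ae_of_all _ fun ω => ?_)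
    rw [Real.norm_eq_abs, abs_of_pos (hWpos n ω)]
    exact hWle n ω
  -- induction: E[W n] ≤ 1
  have hkey : ∀ n, n ≤ T → ∫ ω, W n ω ∂μ ≤ 1 := by
    intro n
    induction n with
    | zero =>
      intro _
      have : ∀ ω, W 0 ω = 1 := by intro ω; simp [hW]
      rw [integral_congr_ae (ae_of_all _ this)]
      simp
    | succ n ih =>
      intro hn1
      have hnT : n < T := hn1
      have ihn := ih (le_of_lt hnT)
      have hptw : ∀ ω, W (n + 1) ω ≤ W n ω + c * (W n ω * (z1 n ω - z2 n ω)) := by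
        intro ω
        have hsplit : W (n + 1) ω
            = W n ω * Real.exp (γ * ((1 - γ) * z1 n ω - z2 n ω)) := by
          simp only [hW, Finset.sum_range_succ, mul_add, Real.exp_add]
        rw [hsplit]
        have h := pointwise_bound hγ0 hγ1 (hnonneg1 n ω) (hnonneg2 n ω) (hdiff n ω)
        calc W n ω * Real.exp (γ * ((1 - γ) * z1 n ω - z2 n ω))
            ≤ W n ω * (1 + c * (z1 n ω - z2 n ω)) :=
              mul_le_mul_of_nonneg_left h (hWpos n ω).le
          _ = W n ω + c * (W n ω * (z1 n ω - z2 n ω)) := by ring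
      have hint_rhs : Integrable
          (fun ω => W n ω + c * (W n ω * (z1 n ω - z2 n ω))) μ :=
        (hWint n).add ((hWXint n).const_mul c)
      have h1 : ∫ ω, W (n + 1) ω ∂μ
          ≤ ∫ ω, (W n ω + c * (W n ω * (z1 n ω - z2 n ω))) ∂μ :=
        integral_mono (hWint (n + 1)) hint_rhs hptw
      have h2 : ∫ ω, (W n ω + c * (W n ω * (z1 n ω - z2 n ω))) ∂μ
          = ∫ ω, W n ω ∂μ + c * ∫ ω, W n ω * (z1 n ω - z2 n ω) ∂μ := by
        rw [integral_add (hWint n) ((hWXint n).const_mul c), integral_const_mul]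
      -- the conditional expectation step
      have hXint : Integrable (fun ω => z1 n ω - z2 n ω) μ := (hint1 n).sub (hint2 n)
      have hmulint : Integrable (W n * fun ω => z1 n ω - z2 n ω) μ := hWXint n
      have hpull := condExp_mul_of_stronglyMeasurable_left (μ := μ) (m := F n)
        (hWmeasF n).stronglyMeasurable hmulint hXint
      have h3 : ∫ ω, W n ω * (z1 n ω - z2 n ω) ∂μ ≤ 0 := by
        have hic := integral_condExp (m := F n) (hle n) (f := W n * fun ω => z1 n ω - z2 n ω) (μ := μ)
        calc ∫ ω, W n ω * (z1 n ω - z2 n ω) ∂μ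
            = ∫ ω, (μ[W n * fun ω => z1 n ω - z2 n ω | F n]) ω ∂μ := hic.symm
          _ = ∫ ω, W n ω * (μ[fun ω => z1 n ω - z2 n ω | F n]) ω ∂μ :=
              integral_congr_ae hpull
          _ ≤ 0 := by
              apply integral_nonpos_of_ae
              filter_upwards [hcond n hnT] with ω hω
              exact mul_nonpos_of_nonneg_of_nonpos (hWpos n ω).le hω
      have h4 : c * ∫ ω, W n ω * (z1 n ω - z2 n ω) ∂μ ≤ 0 :=
        mul_nonpos_of_nonneg_of_nonpos hc0 h3
      linarith [h1, h2 ▸ h1]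
  -- Markov step
  have hET : {ω | (1 - γ) * ∑ τ ∈ Finset.range T, z1 τ ω ≥
        (∑ τ ∈ Finset.range T, z2 τ ω) + A}
      ⊆ {ω | Real.exp (γ * A) ≤ W T ω} := by
    intro ω hω
    simp only [Set.mem_setOf_eq, ge_iff_le] at hω ⊢
    apply Real.exp_le_exp.mpr
    apply mul_le_mul_of_nonneg_left _ hγ0
    have hsum : ∑ τ ∈ Finset.range T, ((1 - γ) * z1 τ ω - z2 τ ω)
        = (1 - γ) * ∑ τ ∈ Finset.range T, z1 τ ω
          - ∑ τ ∈ Finset.range T, z2 τ ω := by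
      rw [Finset.sum_sub_distrib, Finset.mul_sum]
    rw [hsum]
    linarith
  have hsub2 : {ω | Real.exp (γ * A) ≤ W T ω}
      ⊆ {ω | ENNReal.ofReal (Real.exp (γ * A)) ≤ ENNReal.ofReal (W T ω)} :=
    fun ω h => ENNReal.ofReal_le_ofReal h
  have hmarkov := mul_meas_ge_le_lintegral₀
    (μ := μ) (f := fun ω => ENNReal.ofReal (W T ω))
    ((hWmeas T).ennreal_ofReal).aemeasurable (ENNReal.ofReal (Real.exp (γ * A)))
  have hlint : ∫⁻ ω, ENNReal.ofReal (W T ω) ∂μ = ENNReal.ofReal (∫ ω, W T ω ∂μ) :=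
    (ofReal_integral_eq_lintegral_ofReal (hWint T)
      (ae_of_all _ fun ω => (hWpos T ω).le)).symm
  have hchain : ENNReal.ofReal (Real.exp (γ * A)) *
      μ {ω | (1 - γ) * ∑ τ ∈ Finset.range T, z1 τ ω ≥
        (∑ τ ∈ Finset.range T, z2 τ ω) + A} ≤ 1 := by
    calc ENNReal.ofReal (Real.exp (γ * A)) * μ _
        ≤ ENNReal.ofReal (Real.exp (γ * A)) *
          μ {ω | ENNReal.ofReal (Real.exp (γ * A)) ≤ ENNReal.ofReal (W T ω)} := by
          exact mul_le_mul_right (measure_mono (hET.trans hsub2)) _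
      _ ≤ ∫⁻ ω, ENNReal.ofReal (W T ω) ∂μ := hmarkov
      _ = ENNReal.ofReal (∫ ω, W T ω ∂μ) := hlint
      _ ≤ ENNReal.ofReal 1 := ENNReal.ofReal_le_ofReal (hkey T le_rfl)
      _ = 1 := ENNReal.ofReal_one
  have hne0 : ENNReal.ofReal (Real.exp (γ * A)) ≠ 0 := by
    simp [ENNReal.ofReal_eq_zero, not_le, Real.exp_pos]
  have hnetop : ENNReal.ofReal (Real.exp (γ * A)) ≠ ⊤ := ENNReal.ofReal_ne_top
  have hdiv : μ {ω | (1 - γ) * ∑ τ ∈ Finset.range T, z1 τ ω ≥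
        (∑ τ ∈ Finset.range T, z2 τ ω) + A}
      ≤ 1 / ENNReal.ofReal (Real.exp (γ * A)) := by
    rw [ENNReal.le_div_iff_mul_le (Or.inl hne0) (Or.inl hnetop)]
    rwa [mul_comm]
  calc μ _ ≤ 1 / ENNReal.ofReal (Real.exp (γ * A)) := hdiv
    _ = ENNReal.ofReal (Real.exp (-γ * A)) := by
        rw [one_div, ← ENNReal.ofReal_inv_of_pos (Real.exp_pos _), ← Real.exp_neg]
        ring_nf
end
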